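/- If γ is a sufficiently rich intersection context with no failures, P is an intersection protocol for γ, and agent i is at the front of its queue at a point (r,m) of I_{γ,P}, then for every incoming lane l ∈ L_in, either agent i knows that there exist an agent j and an outgoing lane l' with front_j ∧ lane_j = l ∧ intent_j = l', or agent i knows that no agent j has lane_j = l. -/

import Mathlib

open scoped Classical

noncomputable section

namespace Inter

/-- Actions available to each agent. -/
inductive Act where
  | go
  | noop
deriving DecidableEq

/-- A move through the intersection: an incoming lane paired with an outgoing lane. -/
abbrev Move (kin kout : ℕ) := Fin kin × Fin kout

/-- An adversary: a conflict-free arrival schedule, a transmission environment and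
transmitter/receiver failure functions. -/
structure Adversary (kin kout : ℕ) where
  arrive : ℕ → ℕ × Fin kin × Fin kout
  conflictFree : ∀ i j : ℕ, i ≠ j → (arrive i).1 = (arrive j).1 →
    (arrive i).2.1 ≠ (arrive j).2.1
  T : Set ((Fin kin × ℕ) × (Fin kin × ℕ))
  T_front : ∀ l l' : Fin kin, ((l, 0), (l', 0)) ∈ T
  Ft : ℕ → ℕ → Bool
  Fr : ℕ → ℕ → Bool

/-- The lane component of a sensor reading: an incoming lane, ⊥ (not yet arrived),
or ⊤ (departed). -/
inductive LaneStatus (kin : ℕ) where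
  | inLane (l : Fin kin)
  | notArrived
  | finished

/-- The minimal sensor reading: front, lane and intent. -/
structure Reading (kin kout : ℕ) where
  front : Prop
  lane : LaneStatus kin
  intent : Fin kout

/-- Environment states record the adversary, the time, a queue for each incoming lane
and the set of departed agents. -/
structure EnvState (kin kout : ℕ) where
  adv : Adversary kin kout
  time : ℕ
  queue : Fin kin → List ℕ
  done : Set ℕ

/-- Local states: a memory state together with a sensor reading
(the minimal reading plus possibly extra sensor information). -/
abbrev LState (kin kout : ℕ) (Mem Extra : Type*) := Mem × Reading kin kout × Extra

/-- Global states: an environment state and local states for all agents. -/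
abbrev GState (kin kout : ℕ) (Mem Extra : Type*) :=
  EnvState kin kout × (ℕ → LState kin kout Mem Extra)

/-- A run. -/
abbrev Run (kin kout : ℕ) (Mem Extra : Type*) := ℕ → GState kin kout Mem Extra

/-- An action protocol maps each agent's local state to an action. -/
abbrev Prot (kin kout : ℕ) (Mem Extra : Type*) := ℕ → LState kin kout Mem Extra → Act

variable {kin kout : ℕ} {Mem Extra Msg : Type*}

/-- Agent `i` is at the front of some queue. -/
def isFront (e : EnvState kin kout) (i : ℕ) : Prop :=
  ∃ l : Fin kin, (e.queue l).head? = some i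

/-- The (lane, position) of agent `i`, if it is in some queue. -/
def posAt (e : EnvState kin kout) (i : ℕ) : Option (Fin kin × ℕ) :=
  if h : ∃ l : Fin kin, i ∈ e.queue l then some (h.choose, (e.queue h.choose).idxOf i)
  else none

/-- The intended departure lane of agent `i`, as given by the arrival schedule. -/
def intentOf (e : EnvState kin kout) (i : ℕ) : Fin kout := (e.adv.arrive i).2.2

/-- The move `(lane_i, intent_i)` of agent `i`, if it is in some queue. -/
def moveAt (e : EnvState kin kout) (i : ℕ) : Option (Move kin kout) :=
  (posAt e i).map (fun p => (p.1, intentOf e i))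

/-- The minimal sensor reading of agent `i` in environment state `e`. -/
def minimalReading (e : EnvState kin kout) (i : ℕ) : Reading kin kout where
  front := isFront e i
  lane :=
    if h : ∃ l : Fin kin, i ∈ e.queue l then LaneStatus.inLane h.choose
    else if i ∈ e.done then LaneStatus.finished else LaneStatus.notArrived
  intent := intentOf e i

/-- An information-exchange protocol: initial memories, extra sensor information,
a message function and a memory-update function. -/
structure IEP (kin kout : ℕ) (Mem Extra Msg : Type*) where
  initMem : ℕ → Mem
  extra : EnvState kin kout → ℕ → Extra
  msg : ℕ → LState kin kout Mem Extra → Act → Reading kin kout × Extra → Option Msg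
  upd : ℕ → LState kin kout Mem Extra → Act → Set Msg → Mem

/-- One round of the system: agents act, queues are updated (dequeues for agents that go,
enqueues for new arrivals), new sensor readings are taken, messages are broadcast and
received subject to the transmission environment and the failure functions, and memories
are updated. -/
def step (E : IEP kin kout Mem Extra Msg) (P : Prot kin kout Mem Extra)
    (g : GState kin kout Mem Extra) : GState kin kout Mem Extra :=
  let e := g.1
  let act : ℕ → Act := fun i => P i (g.2 i)
  let q' : Fin kin → List ℕ := fun l =>
    let q1 := match (e.queue l).head? with
      | some i => if act i = Act.go then (e.queue l).tail else e.queue l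
      | none => e.queue l
    if h : ∃ i l', e.adv.arrive i = (e.time + 1, l, l') then q1 ++ [h.choose] else q1
  let done' : Set ℕ := e.done ∪ {i | isFront e i ∧ act i = Act.go}
  let e' : EnvState kin kout := ⟨e.adv, e.time + 1, q', done'⟩
  let sens : ℕ → Reading kin kout × Extra := fun i => (minimalReading e' i, E.extra e' i)
  let rcv : ℕ → Set Msg := fun i =>
    if e.adv.Fr e.time i = true ∧ (posAt e' i).isSome = true then
      {m | ∃ j pj pi, E.msg j (g.2 j) (act j) (sens j) = some m ∧
            e.adv.Ft e.time j = true ∧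
            posAt e' j = some pj ∧ posAt e' i = some pi ∧ (pj, pi) ∈ e.adv.T}
    else ∅
  (e', fun i => (E.upd i (g.2 i) (act i) (rcv i), sens i))

/-- An intersection context: an information-exchange protocol together with an
adversary model. -/
structure Ctx (kin kout : ℕ) (Mem Extra Msg : Type*) where
  iep : IEP kin kout Mem Extra Msg
  adv : Set (Adversary kin kout)

/-- Initial global states: time 0, empty queues, no departed agents, an adversary
from the adversary model, and initial local states. -/
def Init (C : Ctx kin kout Mem Extra Msg) (g : GState kin kout Mem Extra) : Prop :=
  g.1.adv ∈ C.adv ∧ g.1.time = 0 ∧ (∀ l, g.1.queue l = []) ∧ g.1.done = ∅ ∧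
  ∀ i, g.2 i = (C.iep.initMem i, minimalReading g.1 i, C.iep.extra g.1 i)

/-- The interpreted system `I_{γ,P}`: the set of runs of protocol `P` in context `γ`. -/
def Runs (C : Ctx kin kout Mem Extra Msg) (P : Prot kin kout Mem Extra) :
    Set (Run kin kout Mem Extra) :=
  {r | Init C (r 0) ∧ ∀ m, r (m + 1) = step C.iep P (r m)}

/-- `front_i` holds at the point `(r,m)`. -/
def frontAt (r : Run kin kout Mem Extra) (m i : ℕ) : Prop := isFront (r m).1 i

/-- `going_i` abbreviates `front_i ∧ ◯¬front_i`. -/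
def goingAt (r : Run kin kout Mem Extra) (m i : ℕ) : Prop :=
  frontAt r m i ∧ ¬ frontAt r (m + 1) i

/-- `GO(r,m)`: the set of agents that go through the intersection in round `m+1`. -/
def GOs (r : Run kin kout Mem Extra) (m : ℕ) : Set ℕ := {i | goingAt r m i}

/-- Validity: an agent goes through the intersection only from the front of its queue. -/
def ValidityP (C : Ctx kin kout Mem Extra Msg) (P : Prot kin kout Mem Extra) : Prop :=
  ∀ r ∈ Runs C P, ∀ m i, goingAt r m i → frontAt r m i

/-- Safety: agents that go simultaneously have compatible moves. -/
def SafetyP (O : Move kin kout → Move kin kout → Prop)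
    (C : Ctx kin kout Mem Extra Msg) (P : Prot kin kout Mem Extra) : Prop :=
  ∀ r ∈ Runs C P, ∀ m i j, i ≠ j → goingAt r m i → goingAt r m j →
    ∀ mi mj, moveAt (r m).1 i = some mi → moveAt (r m).1 j = some mj → O mi mj

/-- Liveness: every agent at the front of a queue eventually goes. -/
def LivenessP (C : Ctx kin kout Mem Extra Msg) (P : Prot kin kout Mem Extra) : Prop :=
  ∀ r ∈ Runs C P, ∀ m i, frontAt r m i → ∃ m' ≥ m, goingAt r m' i

/-- An intersection protocol: an action protocol satisfying Validity, Safety and Liveness. -/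
def IsIntersectionProtocol (O : Move kin kout → Move kin kout → Prop)
    (C : Ctx kin kout Mem Extra Msg) (P : Prot kin kout Mem Extra) : Prop :=
  ValidityP C P ∧ SafetyP O C P ∧ LivenessP C P

/-- `safe-to-go_i` at `(r,m)`: `i` is at the front of its queue (position 0) and the moves
of the agents in `GO(r,m) ∪ {i}` are pairwise compatible. -/
def safeToGo (O : Move kin kout → Move kin kout → Prop)
    (r : Run kin kout Mem Extra) (m i : ℕ) : Prop :=
  (∃ p, posAt (r m).1 i = some p ∧ p.2 = 0) ∧
  ∀ j ∈ GOs r m ∪ {i}, ∀ k ∈ GOs r m ∪ {i}, j ≠ k →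
    ∀ mj mk, moveAt (r m).1 j = some mj → moveAt (r m).1 k = some mk → O mj mk

/-- `P` has unnecessary waiting with respect to `γ`. -/
def UnnecessaryWaiting (O : Move kin kout → Move kin kout → Prop)
    (C : Ctx kin kout Mem Extra Msg) (P : Prot kin kout Mem Extra) : Prop :=
  ∃ r ∈ Runs C P, ∃ m i, safeToGo O r m i ∧ i ∉ GOs r m

/-- The time at which agent `i` goes through the intersection in run `r` (∞ if never). -/
def gotime (r : Run kin kout Mem Extra) (i : ℕ) : ℕ∞ :=
  sInf {n : ℕ∞ | ∃ m : ℕ, goingAt r m i ∧ n = (m : ℕ∞)}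

/-- `P` dominates `P'`: on all corresponding runs, every agent goes at least as early. -/
def Dominates (C : Ctx kin kout Mem Extra Msg) (P P' : Prot kin kout Mem Extra) : Prop :=
  ∀ r ∈ Runs C P, ∀ r' ∈ Runs C P', r 0 = r' 0 → ∀ i, gotime r i ≤ gotime r' i

def StrictDominates (C : Ctx kin kout Mem Extra Msg) (P P' : Prot kin kout Mem Extra) : Prop :=
  Dominates C P P' ∧ ¬ Dominates C P' P

/-- `P` is optimal: no intersection protocol strictly dominates it. -/
def Optimal (O : Move kin kout → Move kin kout → Prop)
    (C : Ctx kin kout Mem Extra Msg) (P : Prot kin kout Mem Extra) : Prop :=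
  ¬ ∃ P' : Prot kin kout Mem Extra,
      IsIntersectionProtocol O C P' ∧ StrictDominates C P' P

/-- `P` lexicographically dominates `P'`. -/
def LexDominates (C : Ctx kin kout Mem Extra Msg) (P P' : Prot kin kout Mem Extra) : Prop :=
  ∀ r ∈ Runs C P, ∀ r' ∈ Runs C P', r 0 = r' 0 →
    (∀ m, GOs r m = GOs r' m) ∨
    ∃ m, (∀ k < m, GOs r k = GOs r' k) ∧ GOs r m ≠ GOs r' m ∧ GOs r' m ⊂ GOs r m

def StrictLexDominates (C : Ctx kin kout Mem Extra Msg) (P P' : Prot kin kout Mem Extra) :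
    Prop :=
  LexDominates C P P' ∧ ¬ LexDominates C P' P

/-- `P` is lexicographically optimal: no intersection protocol strictly lexicographically
dominates it. -/
def LexOptimal (O : Move kin kout → Move kin kout → Prop)
    (C : Ctx kin kout Mem Extra Msg) (P : Prot kin kout Mem Extra) : Prop :=
  ¬ ∃ P' : Prot kin kout Mem Extra,
      IsIntersectionProtocol O C P' ∧ StrictLexDominates C P' P

/-- Knowledge: `K_i φ` holds at `(r,m)` iff `φ` holds at all points of the system where
agent `i` has the same local state. -/
def Kn (S : Set (Run kin kout Mem Extra)) (i : ℕ)
    (φ : Run kin kout Mem Extra → ℕ → Prop) (r : Run kin kout Mem Extra) (m : ℕ) : Prop :=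
  ∀ r' ∈ S, ∀ m', (r' m').2 i = (r m).2 i → φ r' m'

/-- The adversary model has no failures. -/
def NoFailures (C : Ctx kin kout Mem Extra Msg) : Prop :=
  ∀ α ∈ C.adv, ∀ k i, α.Ft k i = true ∧ α.Fr k i = true

/-- Full information exchange: every agent broadcasts (an injective encoding of) its
entire local state in every round, and records every broadcast it receives. -/
def FullInfo (C : Ctx kin kout Mem Extra Msg) : Prop :=
  (∃ enc : LState kin kout Mem Extra → Msg, Function.Injective enc ∧
      ∀ i s a o, C.iep.msg i s a o = some (enc s)) ∧
  (∀ i s a, Function.Injective fun B : Set Msg => C.iep.upd i s a B)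

/-- A sufficiently rich context: every agent that will be at the front of some lane
broadcasts a message encoding its lane and intent, tagged as coming from the front;
no other message is tagged as a front message; and each agent records the
(lane, intent) pair of each front agent it hears from. -/
def SufficientlyRich (C : Ctx kin kout Mem Extra Msg) : Prop :=
  ∃ dec : Msg → Option (Move kin kout),
    (∀ i s a (o : Reading kin kout × Extra) (l : Fin kin),
        o.1.front → o.1.lane = LaneStatus.inLane l →
        ∃ msg, C.iep.msg i s a o = some msg ∧ dec msg = some (l, o.1.intent)) ∧
    (∀ i s a (o : Reading kin kout × Extra), ¬ o.1.front →
        ∀ msg, C.iep.msg i s a o = some msg → dec msg = none) ∧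
    (∃ rec : Mem → Set (Move kin kout),
        ∀ i s a B, rec (C.iep.upd i s a B) = {mv | ∃ msg ∈ B, dec msg = some mv})

/-- The set of agents at the front of a queue. -/
def FrontSet (e : EnvState kin kout) : Set ℕ := {i | isFront e i}

/-- `P` depends only on the agents at the front of their queues. -/
def DependsOnlyOnFront (C : Ctx kin kout Mem Extra Msg) (P : Prot kin kout Mem Extra) :
    Prop :=
  ∀ r ∈ Runs C P, ∀ r' ∈ Runs C P, ∀ m m' i,
    FrontSet (r m).1 = FrontSet (r' m').1 → P i ((r m).2 i) = P i ((r' m').2 i)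

/-- The choices of an adversary in a single round: arrivals, the transmission
environment and the failure values. -/
structure Choice (kin kout : ℕ) where
  arrivals : Set (ℕ × Fin kin × Fin kout)
  T : Set ((Fin kin × ℕ) × (Fin kin × ℕ))
  Ft : ℕ → Bool
  Fr : ℕ → Bool

/-- The choices of adversary `α` in round `m+1`. -/
def choiceAt (α : Adversary kin kout) (m : ℕ) : Choice kin kout where
  arrivals := {p | α.arrive p.1 = (m + 1, p.2.1, p.2.2)}
  T := α.T
  Ft := fun i => α.Ft m i
  Fr := fun i => α.Fr m i

/-- The adversary history `H(α,m) = ⟨α_0, …, α_{m-1}⟩`. -/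
def hist (α : Adversary kin kout) (m : ℕ) : List (Choice kin kout) :=
  (List.range m).map (choiceAt α)

/-- The adversary history of run `r` up to time `m`. -/
def histOf (r : Run kin kout Mem Extra) (m : ℕ) : List (Choice kin kout) :=
  hist (r 0).1.adv m

/-- An intersection policy: a map from adversary histories to sets of permitted moves. -/
abbrev Policy (kin kout : ℕ) := List (Choice kin kout) → Set (Move kin kout)

/-- The set `H_γ` of adversary histories of the context. -/
def Hists (C : Ctx kin kout Mem Extra Msg) : Set (List (Choice kin kout)) :=
  {h | ∃ α ∈ C.adv, ∃ m, h = hist α m}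

/-- A feasible infinite sequence of histories: one arising from a single adversary. -/
def Feasible (F : Set (Adversary kin kout)) (h : ℕ → List (Choice kin kout)) : Prop :=
  ∃ α ∈ F, ∀ m, h m = hist α m

/-- Conflict-freedom of an intersection policy. -/
def ConflictFree (O : Move kin kout → Move kin kout → Prop)
    (C : Ctx kin kout Mem Extra Msg) (σ : Policy kin kout) : Prop :=
  ∀ h ∈ Hists C, ∀ mv ∈ σ h, ∀ mv' ∈ σ h, mv ≠ mv' → O mv mv'

/-- Fairness of an intersection policy. -/
def FairPolicy (C : Ctx kin kout Mem Extra Msg) (σ : Policy kin kout) : Prop :=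
  ∀ h : ℕ → List (Choice kin kout), Feasible C.adv h →
    ∀ mv : Move kin kout, ∀ m, ∃ m' ≥ m, mv ∈ σ (h m')

/-- A correct intersection policy: conflict-free and fair. -/
def CorrectPolicy (O : Move kin kout → Move kin kout → Prop)
    (C : Ctx kin kout Mem Extra Msg) (σ : Policy kin kout) : Prop :=
  ConflictFree O C σ ∧ FairPolicy C σ

/-- A synchronous context: the time is encoded in each agent's local state. -/
def Synchronous (C : Ctx kin kout Mem Extra Msg) : Prop :=
  ∃ clock : LState kin kout Mem Extra → ℕ,
    ∀ P : Prot kin kout Mem Extra, ∀ r ∈ Runs C P, ∀ m i, clock ((r m).2 i) = m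

/-- The knowledge condition of the knowledge-based program `P^σ`:
`front_i ∧ (lane_i, intent_i) ∈ σ`. -/
def phiSigma (σ : Policy kin kout) (i : ℕ) (r : Run kin kout Mem Extra) (m : ℕ) : Prop :=
  frontAt r m i ∧ ∃ mv, moveAt (r m).1 i = some mv ∧ mv ∈ σ (histOf r m)

/-- `P` implements the knowledge-based program `if K_i φ_i then go else noop` in `γ`. -/
def Implements (C : Ctx kin kout Mem Extra Msg) (P : Prot kin kout Mem Extra)
    (φ : ℕ → Run kin kout Mem Extra → ℕ → Prop) : Prop :=
  ∀ r ∈ Runs C P, ∀ m i, (P i ((r m).2 i) = Act.go ↔ Kn (Runs C P) i (φ i) r m)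

/-- Behavioral equivalence: the protocols take the same actions at all reachable states. -/
def BehEq (C : Ctx kin kout Mem Extra Msg) (P P' : Prot kin kout Mem Extra) : Prop :=
  (∀ r ∈ Runs C P, ∀ m i, P i ((r m).2 i) = P' i ((r m).2 i)) ∧
  (∀ r ∈ Runs C P', ∀ m i, P i ((r m).2 i) = P' i ((r m).2 i))

/-- `γ` is `σ`-aware. -/
def SigmaAware (C : Ctx kin kout Mem Extra Msg) (σ : Policy kin kout) : Prop :=
  ∀ P : Prot kin kout Mem Extra, ∀ r ∈ Runs C P, ∀ m i (l : Fin kin) (l' : Fin kout),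
    (l, l') ∈ σ (histOf r m) → i ∈ (r m).1.queue l →
    Kn (Runs C P) i (fun r' m' => (l, l') ∈ σ (histOf r' m')) r m

/-- `γ` is `next`-aware. -/
def NextAware (C : Ctx kin kout Mem Extra Msg)
    (next : List (Choice kin kout) → Fin kin) : Prop :=
  ∀ P : Prot kin kout Mem Extra, ∀ r ∈ Runs C P, ∀ m i (l : Fin kin),
    next (histOf r m) = l →
    Kn (Runs C P) i (fun r' m' => next (histOf r' m') = l) r m

/-- Cyclic distance from `a` to `b` (mod `kin`). -/
def distC (a b : Fin kin) : ℕ := (b.val + kin - a.val) % kin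

/-- `l` lies in the cyclic interval `[a, b)` of incoming lanes. -/
def inCyc (a b l : Fin kin) : Prop := distC a l < distC a b

/-- `mv` is compatible with every move in `S`. -/
def compatAll (O : Move kin kout → Move kin kout → Prop)
    (S : Set (Move kin kout)) (mv : Move kin kout) : Prop :=
  ∀ mv' ∈ S, O mv mv'

/-- The proposition `V_i` of the knowledge-based program `𝐏`. -/
def Vprop (O : Move kin kout → Move kin kout → Prop) (σ : Policy kin kout)
    (next : List (Choice kin kout) → Fin kin) (i : ℕ)
    (r : Run kin kout Mem Extra) (m : ℕ) : Prop :=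
  ∃ mv, moveAt (r m).1 i = some mv ∧ mv ∉ σ (histOf r m) ∧
    (∀ j mj, goingAt r m j → moveAt (r m).1 j = some mj →
        mj ∈ σ (histOf r m) → O mv mj) ∧
    (∀ j mj, j ≠ i → goingAt r m j → moveAt (r m).1 j = some mj →
        mj ∉ σ (histOf r m) → inCyc (next (histOf r m)) mv.1 mj.1 → O mv mj)

/-- The knowledge condition of the knowledge-based program `𝐏`:
`front_i ∧ ((lane_i, intent_i) ∈ σ ∨ V_i)`. -/
def phiP (O : Move kin kout → Move kin kout → Prop) (σ : Policy kin kout)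
    (next : List (Choice kin kout) → Fin kin) (i : ℕ)
    (r : Run kin kout Mem Extra) (m : ℕ) : Prop :=
  frontAt r m i ∧
    ((∃ mv, moveAt (r m).1 i = some mv ∧ mv ∈ σ (histOf r m)) ∨ Vprop O σ next i r m)

/-- Fairness of a `next` function. -/
def FairNext (C : Ctx kin kout Mem Extra Msg)
    (next : List (Choice kin kout) → Fin kin) : Prop :=
  ∀ h : ℕ → List (Choice kin kout), Feasible C.adv h →
    ∀ m (l : Fin kin), ∃ m' ≥ m, next (h m') = l

/-- Fairness of a pair `(σ, next)`. -/
def PairFair (O : Move kin kout → Move kin kout → Prop)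
    (C : Ctx kin kout Mem Extra Msg) (σ : Policy kin kout)
    (next : List (Choice kin kout) → Fin kin) : Prop :=
  ∀ h : ℕ → List (Choice kin kout), Feasible C.adv h →
    ∀ m (mv : Move kin kout), ∃ m' ≥ m,
      mv ∈ σ (h m') ∨ (next (h m') = mv.1 ∧ compatAll O (σ (h m')) mv)

/-- `next(h) = |h| mod |L_in|` at time `t`. -/
def nextL (hkin : 0 < kin) (t : ℕ) : Fin kin := ⟨t % kin, Nat.mod_lt _ hkin⟩

/-- The stages of the construction of the set `Pos_i`, starting from the lane `nxt` and
proceeding in cyclic order; `M` is the set of moves received from front agents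
(empty when there is no communication). -/
def posStage (hkin : 0 < kin) (O : Move kin kout → Move kin kout → Prop)
    (M : Set (Move kin kout)) (nxt : Fin kin) : ℕ → Set (Move kin kout)
  | 0 => ∅
  | t + 1 =>
    let S := posStage hkin O M nxt t
    let l : Fin kin := ⟨(nxt.val + t) % kin, Nat.mod_lt _ hkin⟩
    if ∃ l' : Fin kout, (l, l') ∈ M then
      S ∪ {mv | mv.1 = l ∧ mv ∈ M ∧ compatAll O S mv}
    else
      S ∪ {mv | mv.1 = l ∧ compatAll O S mv}

/-- The set `Pos_i` computed from the received moves `M`, the lane `nxt = next` and the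
agent's own lane `lanei`. -/
def PosSet (hkin : 0 < kin) (O : Move kin kout → Move kin kout → Prop)
    (M : Set (Move kin kout)) (nxt lanei : Fin kin) : Set (Move kin kout) :=
  posStage hkin O M nxt (distC nxt lanei)

/-- The stage `Pos_i^l` of the construction of `Pos_i`, for a lane `l` in the cyclic
interval `[nxt, lane_i)`. -/
def PosUpTo (hkin : 0 < kin) (O : Move kin kout → Move kin kout → Prop)
    (M : Set (Move kin kout)) (nxt l : Fin kin) : Set (Move kin kout) :=
  posStage hkin O M nxt (distC nxt l + 1)

/-- The adversary model with no failures. -/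
def NFadv (kin kout : ℕ) : Set (Adversary kin kout) :=
  {α | ∀ k i, α.Ft k i = true ∧ α.Fr k i = true}

/-- The adversary model with crash failures. -/
def CRadv (kin kout : ℕ) : Set (Adversary kin kout) :=
  {α | (∀ k i, α.Fr k i = true) ∧
    ∀ k i, α.Ft k i = false → ∀ k', k < k' → α.Ft k' i = false}

/-- The adversary model with sending omissions. -/
def SOadv (kin kout : ℕ) : Set (Adversary kin kout) :=
  {α | ∀ k i, α.Fr k i = true}

/-- The information-exchange protocol of `γ_∅`: a single memory state, no messages,
and sensor readings `⟨front_i, lane_i, intent_i, time_i⟩`. -/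
def E0 (kin kout : ℕ) : IEP kin kout Unit ℕ Empty where
  initMem _ := ()
  extra e _ := e.time
  msg _ _ _ _ := none
  upd _ _ _ _ := ()

/-- The context `γ_∅(F)`. -/
def gammaEmpty (kin kout : ℕ) (F : Set (Adversary kin kout)) : Ctx kin kout Unit ℕ Empty :=
  ⟨E0 kin kout, F⟩

/-- The protocol `P^∅`: go iff at the front and own move compatible with `Pos_i`. -/
def Pempty (hkin : 0 < kin) (O : Move kin kout → Move kin kout → Prop) :
    Prot kin kout Unit ℕ := fun _ s =>
  match s.2.1.lane with
  | LaneStatus.inLane l =>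
      if s.2.1.front ∧ compatAll O (PosSet hkin O ∅ (nextL hkin s.2.2) l) (l, s.2.1.intent)
      then Act.go else Act.noop
  | _ => Act.noop

/-- The information-exchange protocol of `γ_intent`: exactly the agents at the front of a
lane broadcast `(lane_i, intent_i)`; the memory is the set of moves received in the
current round; sensor readings are `⟨front_i, lane_i, intent_i, time_i⟩`. -/
def Eintent (kin kout : ℕ) : IEP kin kout (Set (Move kin kout)) ℕ (Move kin kout) where
  initMem _ := ∅
  extra e _ := e.time
  msg _ _ _ o :=
    if o.1.front then
      match o.1.lane with
      | LaneStatus.inLane l => some (l, o.1.intent)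
      | _ => none
    else none
  upd _ _ _ B := B

/-- The context `γ_intent(F)`. -/
def gammaIntent (kin kout : ℕ) (F : Set (Adversary kin kout)) :
    Ctx kin kout (Set (Move kin kout)) ℕ (Move kin kout) :=
  ⟨Eintent kin kout, F⟩

/-- The protocol `P^intent`: go iff at the front and own move compatible with `Pos_i`
computed from the received moves. -/
def Pintent (hkin : 0 < kin) (O : Move kin kout → Move kin kout → Prop) :
    Prot kin kout (Set (Move kin kout)) ℕ := fun _ s =>
  match s.2.1.lane with
  | LaneStatus.inLane l =>
      if s.2.1.front ∧
          compatAll O (PosSet hkin O s.1 (nextL hkin s.2.2) l) (l, s.2.1.intent)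
      then Act.go else Act.noop
  | _ => Act.noop

end Inter

open Inter

/-!
Once agent `i` is at the front, the failure-free exchange of a sufficiently rich context makes
its memory record exactly the moves of all agents at the front of a queue. At every point where
`i` has the same local state the front moves are therefore the same, and a lane is non-empty
exactly when it contributes a front move.
-/

namespace Inter

variable {kin kout : ℕ} {Mem Extra Msg : Type*}

/-- Keeps every agent in at most one queue, which pins down the `choose` in `posAt` and
`minimalReading`. -/
def InScheduledLane (e : EnvState kin kout) : Prop :=
  ∀ j l, j ∈ e.queue l → (e.adv.arrive j).2.1 = l

def frontMoves (e : EnvState kin kout) : Set (Move kin kout) :=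
  {mv | ∃ j, (e.queue mv.1).head? = some j ∧ intentOf e j = mv.2}

def received (E : IEP kin kout Mem Extra Msg) (P : Prot kin kout Mem Extra)
    (g : GState kin kout Mem Extra) (i : ℕ) : Set Msg :=
  if g.1.adv.Fr g.1.time i = true ∧ (posAt (step E P g).1 i).isSome = true then
    {m | ∃ j pj pi, E.msg j (g.2 j) (P j (g.2 j))
          (minimalReading (step E P g).1 j, E.extra (step E P g).1 j) = some m ∧
        g.1.adv.Ft g.1.time j = true ∧
        posAt (step E P g).1 j = some pj ∧ posAt (step E P g).1 i = some pi ∧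
        (pj, pi) ∈ g.1.adv.T}
  else ∅

lemma step_adv (E : IEP kin kout Mem Extra Msg) (P : Prot kin kout Mem Extra)
    (g : GState kin kout Mem Extra) : (step E P g).1.adv = g.1.adv := rfl

lemma step_local (E : IEP kin kout Mem Extra Msg) (P : Prot kin kout Mem Extra)
    (g : GState kin kout Mem Extra) (i : ℕ) :
    (step E P g).2 i = (E.upd i (g.2 i) (P i (g.2 i)) (received E P g i),
      minimalReading (step E P g).1 i, E.extra (step E P g).1 i) := rfl

lemma mem_step_queue {E : IEP kin kout Mem Extra Msg} {P : Prot kin kout Mem Extra}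
    {g : GState kin kout Mem Extra} {l : Fin kin} {j : ℕ}
    (hj : j ∈ (step E P g).1.queue l) :
    j ∈ g.1.queue l ∨ (g.1.adv.arrive j).2.1 = l := by
  have hdeq : ∀ x, x ∈ (match (g.1.queue l).head? with
      | some i => if P i (g.2 i) = Act.go then (g.1.queue l).tail else g.1.queue l
      | none => g.1.queue l) → x ∈ g.1.queue l := by
    intro x hx
    split at hx
    · split_ifs at hx
      exacts [List.mem_of_mem_tail hx, hx]
    · exact hx
  change j ∈ (if h : ∃ i l', g.1.adv.arrive i = (g.1.time + 1, l, l') then _ ++ [h.choose]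
    else _) at hj
  split_ifs at hj with harr
  · rcases List.mem_append.1 hj with hj | hj
    · exact Or.inl (hdeq _ hj)
    · obtain rfl := List.mem_singleton.1 hj
      obtain ⟨l', hl'⟩ := harr.choose_spec
      exact Or.inr (by rw [hl'])
  · exact Or.inl (hdeq _ hj)

namespace InScheduledLane

variable {e : EnvState kin kout} {j : ℕ} {l : Fin kin}

lemma eq_of_mem (he : InScheduledLane e) {l' : Fin kin} (h : j ∈ e.queue l)
    (h' : j ∈ e.queue l') : l = l' := by
  rw [← he j l h, he j l' h']

lemma posAt_eq (he : InScheduledLane e) (hj : (e.queue l).head? = some j) :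
    posAt e j = some (l, 0) := by
  obtain ⟨t, hq⟩ := List.head?_eq_some_iff.1 hj
  have hmem : j ∈ e.queue l := List.mem_of_mem_head? hj
  have hex : ∃ l0, j ∈ e.queue l0 := ⟨l, hmem⟩
  rw [posAt, dif_pos hex, he.eq_of_mem hex.choose_spec hmem, hq, List.idxOf_cons_self]

lemma lane_minimalReading (he : InScheduledLane e) (hj : (e.queue l).head? = some j) :
    (minimalReading e j).lane = LaneStatus.inLane l := by
  have hmem : j ∈ e.queue l := List.mem_of_mem_head? hj
  have hex : ∃ l0, j ∈ e.queue l0 := ⟨l, hmem⟩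
  simp only [minimalReading]
  rw [dif_pos hex, he.eq_of_mem hex.choose_spec hmem]

end InScheduledLane

lemma queue_ne_nil_iff_exists_frontMoves (e : EnvState kin kout) (l : Fin kin) :
    e.queue l ≠ [] ↔ ∃ l', (l, l') ∈ frontMoves e := by
  constructor
  · intro h
    obtain ⟨j, t, hq⟩ := List.exists_cons_of_ne_nil h
    exact ⟨intentOf e j, j, by simp [hq], rfl⟩
  · rintro ⟨l', j, hj, -⟩ hq
    simp [hq] at hj

section Decoding

variable {E : IEP kin kout Mem Extra Msg} {P : Prot kin kout Mem Extra}
  {dec : Msg → Option (Move kin kout)}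

/-- Without failures every front broadcast reaches every front agent (`T_front`), and only
front broadcasts decode to moves. -/
lemma decode_received_eq_frontMoves
    (hsend : ∀ i s a (o : Reading kin kout × Extra) (l : Fin kin),
        o.1.front → o.1.lane = LaneStatus.inLane l →
        ∃ msg, E.msg i s a o = some msg ∧ dec msg = some (l, o.1.intent))
    (hquiet : ∀ i s a (o : Reading kin kout × Extra), ¬ o.1.front →
        ∀ msg, E.msg i s a o = some msg → dec msg = none)
    {g : GState kin kout Mem Extra} (hFt : ∀ j, g.1.adv.Ft g.1.time j = true) {i : ℕ}
    (hFr : g.1.adv.Fr g.1.time i = true) (he : InScheduledLane (step E P g).1)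
    (hi : isFront (step E P g).1 i) :
    {mv | ∃ msg ∈ received E P g i, dec msg = some mv} = frontMoves (step E P g).1 := by
  obtain ⟨li, hli⟩ := hi
  have hposi := he.posAt_eq hli
  rw [received, if_pos ⟨hFr, by rw [hposi]; rfl⟩]
  ext mv
  constructor
  · rintro ⟨msg, ⟨j, -, -, hmsg, -⟩, hdec⟩
    by_cases hj : isFront (step E P g).1 j
    · obtain ⟨lj, hlj⟩ := hj
      obtain ⟨msg', hmsg', hdec'⟩ := hsend j _ _
        (minimalReading _ j, E.extra _ j) lj ⟨lj, hlj⟩ (he.lane_minimalReading hlj)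
      obtain rfl := Option.some.inj (hmsg'.symm.trans hmsg)
      obtain rfl := Option.some.inj (hdec.symm.trans hdec')
      exact ⟨j, hlj, rfl⟩
    · cases (hdec.symm.trans (hquiet _ _ _ _ hj msg hmsg))
  · rintro ⟨j, hj, hint⟩
    obtain ⟨msg, hmsg, hdec⟩ := hsend j _ _
      (minimalReading _ j, E.extra _ j) mv.1 ⟨mv.1, hj⟩ (he.lane_minimalReading hj)
    refine ⟨msg, ⟨j, _, _, hmsg, hFt j, he.posAt_eq hj, hposi, g.1.adv.T_front mv.1 li⟩, ?_⟩
    rw [hdec]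
    exact congrArg some (Prod.ext rfl hint)

end Decoding

namespace Runs

variable {C : Ctx kin kout Mem Extra Msg} {P : Prot kin kout Mem Extra}
  {r : Run kin kout Mem Extra}

lemma adv_mem (hr : r ∈ Runs C P) (m : ℕ) : (r m).1.adv ∈ C.adv := by
  induction m with
  | zero => exact hr.1.1
  | succ n ih => rw [hr.2 n, step_adv]; exact ih

lemma inScheduledLane (hr : r ∈ Runs C P) (m : ℕ) : InScheduledLane (r m).1 := by
  induction m with
  | zero =>
    intro j l hj
    simp [hr.1.2.2.1 l] at hj
  | succ n ih =>
    intro j l hj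
    rw [hr.2 n] at hj ⊢
    exact (mem_step_queue hj).elim (ih j l) id

lemma reading_eq (hr : r ∈ Runs C P) (m i : ℕ) :
    ((r m).2 i).2.1 = minimalReading (r m).1 i := by
  cases m with
  | zero => rw [hr.1.2.2.2.2 i]
  | succ n => rw [hr.2 n, step_local]

lemma exists_eq_succ_of_isFront (hr : r ∈ Runs C P) {m i : ℕ} (hi : isFront (r m).1 i) :
    ∃ n, m = n + 1 := by
  cases m with
  | zero =>
    obtain ⟨l, hl⟩ := hi
    simp [hr.1.2.2.1 l] at hl
  | succ n => exact ⟨n, rfl⟩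

end Runs

lemma exists_memory_decoding_frontMoves {C : Ctx kin kout Mem Extra Msg}
    (hrich : SufficientlyRich C) (hnf : NoFailures C) (P : Prot kin kout Mem Extra) :
    ∃ rec : Mem → Set (Move kin kout), ∀ r ∈ Runs C P, ∀ m i, isFront (r m).1 i →
      rec ((r m).2 i).1 = frontMoves (r m).1 := by
  obtain ⟨dec, hsend, hquiet, rec, hrec⟩ := hrich
  refine ⟨rec, fun r hr m i hi => ?_⟩
  obtain ⟨n, rfl⟩ := Runs.exists_eq_succ_of_isFront hr hi
  have hnfn := hnf _ (Runs.adv_mem hr n)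
  have he := Runs.inScheduledLane hr (n + 1)
  rw [hr.2 n] at hi he ⊢
  rw [step_local, hrec]
  exact decode_received_eq_frontMoves hsend hquiet (fun j => (hnfn _ j).1) (hnfn _ i).2 he hi

lemma frontMoves_eq_of_local_eq {C : Ctx kin kout Mem Extra Msg} {P : Prot kin kout Mem Extra}
    (hrich : SufficientlyRich C) (hnf : NoFailures C)
    {r r' : Run kin kout Mem Extra} (hr : r ∈ Runs C P) (hr' : r' ∈ Runs C P) {m m' i : ℕ}
    (hi : isFront (r m).1 i) (hloc : (r' m').2 i = (r m).2 i) :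
    frontMoves (r' m').1 = frontMoves (r m).1 := by
  obtain ⟨rec, hrec⟩ := exists_memory_decoding_frontMoves hrich hnf P
  have hi' : isFront (r' m').1 i := by
    have hread := Runs.reading_eq hr' m' i
    rw [hloc, Runs.reading_eq hr m i] at hread
    exact (congrArg Reading.front hread).mp hi
  rw [← hrec r' hr' m' i hi', ← hrec r hr m i hi, hloc]

end Inter

theorem front_agent_knows_lanes_general
    {kin kout : ℕ} {Mem Extra Msg : Type*}
    (C : Ctx kin kout Mem Extra Msg) (P : Prot kin kout Mem Extra)
    (hrich : SufficientlyRich C) (hnf : NoFailures C)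
    (r : Run kin kout Mem Extra) (hr : r ∈ Runs C P) (m i : ℕ)
    (hfront : frontAt r m i) :
    ∀ l : Fin kin,
      Kn (Runs C P) i
        (fun r' m' => ∃ (j : ℕ) (l' : Fin kout),
          frontAt r' m' j ∧ j ∈ (r' m').1.queue l ∧ intentOf (r' m').1 j = l') r m ∨
      Kn (Runs C P) i (fun r' m' => ∀ j : ℕ, j ∉ (r' m').1.queue l) r m := by
  intro l
  have hsame : ∀ r' ∈ Runs C P, ∀ m', (r' m').2 i = (r m).2 i →
      ((r' m').1.queue l ≠ [] ↔ (r m).1.queue l ≠ []) := fun r' hr' m' hloc => by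
    rw [queue_ne_nil_iff_exists_frontMoves, queue_ne_nil_iff_exists_frontMoves,
      frontMoves_eq_of_local_eq hrich hnf hr hr' hfront hloc]
  by_cases hl : (r m).1.queue l = []
  · right
    intro r' hr' m' hloc j hj
    exact (hsame r' hr' m' hloc).1 (List.ne_nil_of_mem hj) hl
  · left
    intro r' hr' m' hloc
    obtain ⟨j, t, hq⟩ := List.exists_cons_of_ne_nil ((hsame r' hr' m' hloc).2 hl)
    have hj : ((r' m').1.queue l).head? = some j := by rw [hq]; rfl
    exact ⟨j, _, ⟨l, hj⟩, List.mem_of_mem_head? hj, rfl⟩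

/-- In a sufficiently rich intersection context with no failures, an agent at
the front of its queue knows, for each incoming lane `l`, either that some agent `j` with
some intent `l'` is at the front of lane `l`, or that no agent is in lane `l`. -/
theorem front_agent_knows_lanes
    {kin kout : ℕ} {Mem Extra Msg : Type*}
    (O : Move kin kout → Move kin kout → Prop)
    (hO : ∀ a b, O a b → O b a)
    (C : Ctx kin kout Mem Extra Msg) (P : Prot kin kout Mem Extra)
    (hrich : SufficientlyRich C) (hnf : NoFailures C)
    (hP : IsIntersectionProtocol O C P)
    (r : Run kin kout Mem Extra) (hr : r ∈ Runs C P) (m i : ℕ)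
    (hfront : frontAt r m i) :
    ∀ l : Fin kin,
      Kn (Runs C P) i
        (fun r' m' => ∃ (j : ℕ) (l' : Fin kout),
          frontAt r' m' j ∧ j ∈ (r' m').1.queue l ∧ intentOf (r' m').1 j = l') r m ∨
      Kn (Runs C P) i (fun r' m' => ∀ j : ℕ, j ∉ (r' m').1.queue l) r m :=
  front_agent_knows_lanes_general C P hrich hnf r hr m i hfront
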